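/- arXiv:1108.5164 — 3 statements merged into one kernel-verified Lean document; each statement's English description precedes it below -/
import Mathlib

section
/- Fix N ∈ ℕ. For integers 1 ≤ q ≤ N and a ∈ 𝒫_q = {a ∈ ℤ : 1 ≤ a ≤ q, gcd(a,q) = 1}, let J_{a/q} = (a/q − 1/(Nq), a/q + 1/(Nq)) ⊂ ℝ. Call J_{a/q} a major arc if q < N/10 and a minor arc otherwise. Then for every t ∈ (0,1], the number of pairs (q, a) with 1 ≤ q ≤ N and a ∈ 𝒫_q such that t ∈ J_{a/q} is at most 100; that is, ‖∑_{major arcs J} 1_J‖_∞ + ‖∑_{minor arcs J} 1_J‖_∞ ≤ 100. -/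
/-!
Distinct reduced fractions `a/q ≠ a'/q'` are at least `1/(q q')` apart, while two arcs through
`t` put them within `1/(N q) + 1/(N q')` of each other; hence `q + q' > N` for any two arcs
through `t`. So at most one arc through `t` has `2q ≤ N`. The others have `2q > N`: scaled by
`N²`, their centres lie within `2` of `N² t` and are pairwise at least `1` apart, so there are at
most four of them.
-/

theorem card_le_ceil_of_one_le_abs_sub {ι : Type*} (s : Finset ι) (f : ι → ℝ) {a b : ℝ}
    (hf : ∀ i ∈ s, f i ∈ Set.Ico a b)
    (hsep : ∀ i ∈ s, ∀ j ∈ s, i ≠ j → 1 ≤ |f i - f j|) :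
    s.card ≤ ⌈b - a⌉₊ := by
  have hmaps : Set.MapsTo (fun i => ⌊f i - a⌋) s (Finset.Ico 0 ⌈b - a⌉) := by
    intro i hi
    obtain ⟨hai, hib⟩ := hf i hi
    simp only [Finset.coe_Ico, Set.mem_Ico]
    exact ⟨Int.floor_nonneg.mpr (sub_nonneg.mpr hai), Int.floor_lt_ceil_of_lt (by linarith)⟩
  have hinj : Set.InjOn (fun i => ⌊f i - a⌋) s := by
    intro i hi j hj hij
    by_contra hne
    have := Int.abs_sub_lt_one_of_floor_eq_floor hij
    rw [sub_sub_sub_cancel_right] at this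
    exact (hsep i hi j hj hne).not_gt this
  simpa [Int.card_Ico, Int.ceil_toNat] using Finset.card_le_card_of_injOn _ hmaps hinj

theorem one_div_mul_le_abs_div_sub_div {a a' : ℤ} {q q' : ℕ} (hq : 0 < q) (hq' : 0 < q')
    (hcop : a.natAbs.Coprime q) (hcop' : a'.natAbs.Coprime q') (hne : (a, q) ≠ (a', q')) :
    1 / ((q : ℝ) * q') ≤ |(a : ℝ) / q - a' / q'| := by
  have hcross : a * q' - a' * q ≠ 0 := by
    intro h
    have hrat : (a / q : ℚ) = a' / q' := by
      rw [div_eq_div_iff (by positivity) (by positivity)]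
      exact_mod_cast sub_eq_zero.mp h
    have hnum := Rat.num_div_eq_of_coprime (b := q) (by exact_mod_cast hq) hcop
    have hden := Rat.den_div_eq_of_coprime (b := q) (by exact_mod_cast hq) hcop
    have hnum' := Rat.num_div_eq_of_coprime (b := q') (by exact_mod_cast hq') hcop'
    have hden' := Rat.den_div_eq_of_coprime (b := q') (by exact_mod_cast hq') hcop'
    push_cast at hnum hden hnum' hden'
    rw [hrat] at hnum hden
    exact hne (Prod.ext (hnum.symm.trans hnum') (by exact_mod_cast hden.symm.trans hden'))
  have hdiff : (a : ℝ) / q - a' / q' = ((a * q' - a' * q : ℤ) : ℝ) / (q * q') := by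
    field_simp
    push_cast
    ring
  have hpos : (0 : ℝ) < q * q' := by positivity
  rw [hdiff, abs_div, abs_of_pos hpos]
  refine div_le_div_of_nonneg_right ?_ hpos.le
  exact_mod_cast Int.one_le_abs hcross

-- The arcs `J_{a/q}` containing `t`, as pairs `(q, a)`.
noncomputable def arcsThrough (N : ℕ) (t : ℝ) : Finset (ℕ × ℕ) :=
  (Finset.Icc 1 N ×ˢ Finset.Icc 1 N).filter
    (fun qa : ℕ × ℕ => qa.2 ≤ qa.1 ∧ Nat.gcd qa.2 qa.1 = 1 ∧
      |t - (qa.2 : ℝ) / (qa.1 : ℝ)| < 1 / ((N : ℝ) * (qa.1 : ℝ)))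

namespace arcsThrough

variable {N : ℕ} {t : ℝ} {x y : ℕ × ℕ}

theorem mem_iff : x ∈ arcsThrough N t ↔ ((1 ≤ x.1 ∧ x.1 ≤ N) ∧ 1 ≤ x.2 ∧ x.2 ≤ N) ∧
    x.2 ≤ x.1 ∧ Nat.gcd x.2 x.1 = 1 ∧ |t - (x.2 : ℝ) / x.1| < 1 / ((N : ℝ) * x.1) := by
  simp only [arcsThrough, Finset.mem_filter, Finset.mem_product, Finset.mem_Icc]

theorem one_div_mul_le_abs_sub (hx : x ∈ arcsThrough N t) (hy : y ∈ arcsThrough N t)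
    (hxy : x ≠ y) : 1 / ((x.1 : ℝ) * y.1) ≤ |(x.2 : ℝ) / x.1 - (y.2 : ℝ) / y.1| := by
  obtain ⟨⟨⟨hx1, -⟩, -⟩, -, hxcop, -⟩ := mem_iff.mp hx
  obtain ⟨⟨⟨hy1, -⟩, -⟩, -, hycop, -⟩ := mem_iff.mp hy
  have := one_div_mul_le_abs_div_sub_div (a := x.2) (a' := y.2) hx1 hy1
    (by simpa using hxcop) (by simpa using hycop) (fun h => hxy (by
      simp only [Prod.mk.injEq, Nat.cast_inj] at h
      exact Prod.ext h.2 h.1))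
  simpa using this

theorem lt_add (hx : x ∈ arcsThrough N t) (hy : y ∈ arcsThrough N t) (hxy : x ≠ y) :
    N < x.1 + y.1 := by
  obtain ⟨⟨⟨hx1, hxN⟩, -⟩, -, -, hxt⟩ := mem_iff.mp hx
  obtain ⟨⟨⟨hy1, -⟩, -⟩, -, -, hyt⟩ := mem_iff.mp hy
  have hxpos : (0 : ℝ) < x.1 := by exact_mod_cast hx1
  have hypos : (0 : ℝ) < y.1 := by exact_mod_cast hy1
  have hNpos : (0 : ℝ) < N := by exact_mod_cast hx1.trans hxN
  have hgap : 1 / ((x.1 : ℝ) * y.1) < ((x.1 + y.1) / N) / (x.1 * y.1) :=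
    calc 1 / ((x.1 : ℝ) * y.1) ≤ |(x.2 : ℝ) / x.1 - (y.2 : ℝ) / y.1| :=
          one_div_mul_le_abs_sub hx hy hxy
      _ ≤ |t - (x.2 : ℝ) / x.1| + |t - (y.2 : ℝ) / y.1| := by
          rw [abs_sub_comm t ((x.2 : ℝ) / x.1)]; exact abs_sub_le _ t _
      _ < 1 / ((N : ℝ) * x.1) + 1 / ((N : ℝ) * y.1) := add_lt_add hxt hyt
      _ = ((x.1 + y.1) / N) / (x.1 * y.1) := by field_simp; ring
  rw [div_lt_div_iff_of_pos_right (by positivity), one_lt_div hNpos] at hgap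
  exact_mod_cast hgap

theorem card_filter_two_mul_le_le_one :
    ((arcsThrough N t).filter (fun x => 2 * x.1 ≤ N)).card ≤ 1 := by
  refine Finset.card_le_one.mpr fun x hx y hy => ?_
  rw [Finset.mem_filter] at hx hy
  by_contra hxy
  have := lt_add hx.1 hy.1 hxy
  omega

theorem abs_sq_mul_sub_lt_two (hx : x ∈ arcsThrough N t) (hminor : N < 2 * x.1) :
    |(N : ℝ) ^ 2 * (x.2 / x.1) - N ^ 2 * t| < 2 := by
  obtain ⟨⟨⟨hx1, hxN⟩, -⟩, -, -, hxt⟩ := mem_iff.mp hx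
  have hxpos : (0 : ℝ) < x.1 := by exact_mod_cast hx1
  have hNpos : (0 : ℝ) < N := by exact_mod_cast hx1.trans hxN
  have hminor' : (N : ℝ) < 2 * x.1 := by exact_mod_cast hminor
  calc |(N : ℝ) ^ 2 * (x.2 / x.1) - N ^ 2 * t| = N ^ 2 * |t - x.2 / x.1| := by
        rw [← mul_sub, abs_mul, abs_sub_comm, abs_of_nonneg (by positivity)]
    _ ≤ N ^ 2 * (1 / (N * x.1)) := by gcongr
    _ = N / x.1 := by field_simp
    _ < 2 := by rw [div_lt_iff₀ hxpos]; exact hminor'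

theorem one_le_abs_sq_mul_sub (hx : x ∈ arcsThrough N t) (hy : y ∈ arcsThrough N t)
    (hxy : x ≠ y) : 1 ≤ |(N : ℝ) ^ 2 * (x.2 / x.1) - N ^ 2 * (y.2 / y.1)| := by
  obtain ⟨⟨⟨hx1, hxN⟩, -⟩, -⟩ := mem_iff.mp hx
  obtain ⟨⟨⟨hy1, hyN⟩, -⟩, -⟩ := mem_iff.mp hy
  have hqq : (x.1 : ℝ) * y.1 ≤ N ^ 2 := by rw [sq]; gcongr
  have hqpos : (0 : ℝ) < x.1 * y.1 := by
    have : (0 : ℝ) < x.1 := by exact_mod_cast hx1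
    have : (0 : ℝ) < y.1 := by exact_mod_cast hy1
    positivity
  calc (1 : ℝ) ≤ N ^ 2 * (1 / (x.1 * y.1)) := by
        rw [mul_one_div, le_div_iff₀ hqpos, one_mul]; exact hqq
    _ ≤ N ^ 2 * |(x.2 : ℝ) / x.1 - y.2 / y.1| := by
        gcongr; exact one_div_mul_le_abs_sub hx hy hxy
    _ = |(N : ℝ) ^ 2 * (x.2 / x.1) - N ^ 2 * (y.2 / y.1)| := by
        rw [← mul_sub, abs_mul, abs_of_nonneg (sq_nonneg (N : ℝ))]

theorem card_filter_lt_two_mul_le_four :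
    ((arcsThrough N t).filter (fun x => ¬ 2 * x.1 ≤ N)).card ≤ 4 := by
  have hceil : ⌈((N : ℝ) ^ 2 * t + 2) - ((N : ℝ) ^ 2 * t - 2)⌉₊ = 4 := by norm_num
  rw [← hceil]
  refine card_le_ceil_of_one_le_abs_sub _ (fun x => (N : ℝ) ^ 2 * (x.2 / x.1)) ?_ ?_
  · intro x hx
    rw [Finset.mem_filter] at hx
    have hclose := abs_lt.mp (abs_sq_mul_sub_lt_two hx.1 (not_le.mp hx.2))
    constructor <;> linarith [hclose.1, hclose.2]
  · intro x hx y hy hxy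
    exact one_le_abs_sq_mul_sub (Finset.mem_filter.mp hx).1 (Finset.mem_filter.mp hy).1 hxy

end arcsThrough

theorem stmt6_general (N : ℕ) (t : ℝ) :
    ((Finset.Icc 1 N ×ˢ Finset.Icc 1 N).filter
        (fun qa : ℕ × ℕ => qa.2 ≤ qa.1 ∧ Nat.gcd qa.2 qa.1 = 1 ∧
          |t - (qa.2 : ℝ) / (qa.1 : ℝ)| < 1 / ((N : ℝ) * (qa.1 : ℝ)))).card ≤ 100 := by
  show (arcsThrough N t).card ≤ 100
  rw [← Finset.card_filter_add_card_filter_not (fun x => 2 * x.1 ≤ N)]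
  have := arcsThrough.card_filter_two_mul_le_le_one (N := N) (t := t)
  have := arcsThrough.card_filter_lt_two_mul_le_four (N := N) (t := t)
  omega

/-- For fixed `N` and `t ∈ (0,1]`, the number of pairs `(q, a)` with `1 ≤ q ≤ N`,
`1 ≤ a ≤ q`, `gcd(a,q) = 1` and `t ∈ J_{a/q} = (a/q - 1/(Nq), a/q + 1/(Nq))`
is at most `100`. -/
theorem stmt6 (N : ℕ) (hN : 1 ≤ N) (t : ℝ) (ht0 : 0 < t) (ht1 : t ≤ 1) :
    ((Finset.Icc 1 N ×ˢ Finset.Icc 1 N).filter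
        (fun qa : ℕ × ℕ => qa.2 ≤ qa.1 ∧ Nat.gcd qa.2 qa.1 = 1 ∧
          |t - (qa.2 : ℝ) / (qa.1 : ℝ)| < 1 / ((N : ℝ) * (qa.1 : ℝ)))).card ≤ 100 :=
  stmt6_general N t
end

section
/- There is an absolute constant C such that the following holds (Weyl's inequality for quadratic exponential sums). Let a, q be coprime integers with q ≥ 2, and let t, x be real numbers with |t − a/q| ≤ 1/q². Then for every N ∈ ℕ: |∑_{n=1}^{N} e^{2πi(t n² + x n)}| ≤ C · max{ N/√q, √(N log q), √(q log q) }. -/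
open Complex Real
open scoped Classical

/-!
Write `e(θ) = exp(2πiθ)` and `‖θ‖` for the distance from `θ` to the nearest integer. Squaring
the sum and grouping the pairs `(n + h, n)` by `h` (Weyl differencing) gives
`|S|² ≤ ∑_{|h| < N} |∑_n e(2thn)|`, and each inner sum is geometric, so
`|S|² ≤ ∑_{|k| ≤ 2N} min(N, 1/‖tk‖)`.
Cut the range of `k` into `≪ N/q + 1` blocks of `q` consecutive integers. On the block
`(m, m + q]`, `tk` is within `1/q` of `γ + ak/q` with `γ = (t - a/q) m`; as `gcd(a, q) = 1`,
these `q` points fall into distinct slots `[r/q, (r + 1)/q)` of `ℝ/ℤ`, and the slot `r` lies at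
distance `≥ min(r, q - 1 - r)/q` from `0`. So a block contributes at most
`4N + 2q ∑_{j ≤ q} 1/j ≪ N + q log q`, and altogether `|S|² ≪ N²/q + N log q + q log q`.
-/

open Finset
open scoped FourierTransform Pointwise ComplexConjugate

lemma four_mul_norm_le_norm_fourierChar_sub_one (θ : ℝ) :
    4 * ‖(θ : UnitAddCircle)‖ ≤ ‖(𝐞 θ : ℂ) - 1‖ := by
  set β := θ - round θ
  have hβ : |β| ≤ 1 / 2 := abs_sub_round θ
  have hperiodic : 𝐞 θ = 𝐞 β := by
    have hint : 𝐞 (round θ : ℤ) = 1 := by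
      rw [← Circle.coe_eq_one, Real.fourierChar_apply,
        ← Complex.exp_int_mul_two_pi_mul_I (round θ)]
      push_cast
      ring_nf
    rw [show θ = β + (round θ : ℤ) by ring, AddChar.map_add_eq_mul, hint, mul_one]
  rw [UnitAddCircle.norm_eq, hperiodic, Real.fourierChar_apply, mul_comm _ I,
    Complex.norm_exp_I_mul_ofReal_sub_one, norm_mul, Real.norm_ofNat, Real.norm_eq_abs,
    show 2 * π * β / 2 = π * β by ring]
  have hjordan := Real.mul_abs_le_abs_sin (x := π * β) (by
    rw [abs_mul, abs_of_pos pi_pos]; nlinarith [pi_pos])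
  rw [abs_mul, abs_of_pos pi_pos] at hjordan
  have : 2 / π * (π * |β|) = 2 * |β| := by field_simp
  linarith

lemma norm_geom_sum_mul_norm_sub_one_le {𝕜 : Type*} [NormedDivisionRing 𝕜] {z : 𝕜}
    (hz : ‖z‖ = 1) (L : ℕ) : ‖∑ j ∈ range L, z ^ j‖ * ‖z - 1‖ ≤ 2 := by
  rw [← norm_mul, geom_sum_mul]
  calc ‖z ^ L - 1‖ ≤ ‖z ^ L‖ + ‖(1 : 𝕜)‖ := norm_sub_le _ _
    _ = 2 := by rw [norm_pow, hz, one_pow, norm_one]; norm_num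

lemma norm_mul_norm_sum_fourierChar_Icc_le (α c : ℝ) (A B : ℤ) :
    ‖(α : UnitAddCircle)‖ * ‖∑ n ∈ Icc A B, (𝐞 (α * n + c) : ℂ)‖ ≤ 1 / 2 := by
  set L := (B + 1 - A).toNat
  have hshift : ∑ n ∈ Icc A B, (𝐞 (α * n + c) : ℂ) =
      𝐞 (α * A + c) * ∑ j ∈ range L, (𝐞 α : ℂ) ^ j := by
    rw [Int.Icc_eq_finset_map, sum_map, mul_sum]
    refine sum_congr rfl fun j _ => ?_
    rw [← Circle.coe_pow, ← AddChar.map_nsmul_eq_pow, ← Circle.coe_mul,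
      ← AddChar.map_add_eq_mul]
    simp only [Function.Embedding.trans_apply, Nat.castEmbedding_apply,
      addLeftEmbedding_apply, nsmul_eq_mul]
    push_cast
    ring_nf
  rw [hshift, norm_mul, Circle.norm_coe, one_mul]
  have hgeom := norm_geom_sum_mul_norm_sub_one_le (Circle.norm_coe (𝐞 α)) L
  have hlower := four_mul_norm_le_norm_fourierChar_sub_one α
  nlinarith [norm_nonneg (∑ j ∈ range L, (𝐞 α : ℂ) ^ j)]

lemma norm_sum_fourierChar_le_card {ι : Type*} (s : Finset ι) (f : ι → ℝ) :
    ‖∑ n ∈ s, (𝐞 (f n) : ℂ)‖ ≤ #s := by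
  simpa [Circle.norm_coe] using norm_sum_le s fun n => (𝐞 (f n) : ℂ)

lemma norm_sum_sq_le_sum_norm_sum_mul_conj {α : Type*} [AddCommGroup α] [DecidableEq α]
    (I : Finset α) (u : α → ℂ) :
    ‖∑ n ∈ I, u n‖ ^ 2 ≤
      ∑ h ∈ I - I, ‖∑ n ∈ I with n + h ∈ I, u (n + h) * conj (u n)‖ := by
  have hdouble : ‖∑ n ∈ I, u n‖ ^ 2 = ‖∑ p ∈ I ×ˢ I, u p.1 * conj (u p.2)‖ := by
    simp only [sum_product]
    rw [← sum_mul_sum, ← map_sum, norm_mul, RCLike.norm_conj, sq]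
  have hfiber : ∀ h, ∑ p ∈ I ×ˢ I with p.1 - p.2 = h, u p.1 * conj (u p.2) =
      ∑ n ∈ I with n + h ∈ I, u (n + h) * conj (u n) := fun h =>
    sum_nbij' Prod.snd (fun n => (n + h, n)) (by aesop) (by aesop) (by aesop) (by aesop)
      (by aesop)
  have hmaps : ∀ p ∈ I ×ˢ I, p.1 - p.2 ∈ I - I := fun p hp =>
    sub_mem_sub (mem_product.1 hp).1 (mem_product.1 hp).2
  rw [hdouble, ← sum_fiberwise_of_maps_to hmaps]
  simp only [hfiber]
  exact norm_sum_le _ _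

lemma fourierChar_quadratic_mul_conj (t x : ℝ) (n h : ℤ) :
    (𝐞 (t * ↑(n + h) ^ 2 + x * ↑(n + h)) : ℂ) * conj (𝐞 (t * n ^ 2 + x * n) : ℂ) =
      𝐞 (2 * t * h * n + (t * h ^ 2 + x * h)) := by
  rw [← Circle.coe_inv_eq_conj, ← AddChar.map_neg_eq_inv, ← Circle.coe_mul,
    ← AddChar.map_add_eq_mul]
  push_cast
  ring_nf

lemma filter_add_mem_Icc (N h : ℤ) :
    {n ∈ Icc 1 N | n + h ∈ Icc 1 N} = Icc (max 1 (1 - h)) (min N (N - h)) := by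
  ext n
  simp only [mem_filter, mem_Icc, max_le_iff, le_min_iff]
  omega

lemma weyl_differencing (t x : ℝ) (N : ℕ) :
    ∃ K : Finset ℤ, ∃ E : ℤ → ℝ, K ⊆ Ioc (-(2 * N : ℤ)) (2 * N) ∧
      (∀ k ∈ K, E k ≤ N ∧ ‖((t * k : ℝ) : UnitAddCircle)‖ * E k ≤ 1) ∧
      ‖∑ n ∈ Icc (1 : ℤ) N, (𝐞 (t * n ^ 2 + x * n) : ℂ)‖ ^ 2 ≤ ∑ k ∈ K, E k := by
  set I := Icc (1 : ℤ) N
  set G : ℤ → ℝ := fun h => ‖∑ n ∈ Icc (max 1 (1 - h)) (min (N : ℤ) (N - h)),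
    (𝐞 (2 * t * h * n + (t * h ^ 2 + x * h)) : ℂ)‖
  refine ⟨(I - I).image (2 * ·), fun k => G (k / 2), ?_, ?_, ?_⟩
  · intro k hk
    simp only [mem_image, mem_sub, I, mem_Icc] at hk
    obtain ⟨-, ⟨m, hm, n, hn, rfl⟩, rfl⟩ := hk
    rw [mem_Ioc]
    omega
  · simp only [forall_mem_image]
    intro h _
    rw [Int.mul_ediv_cancel_left _ two_ne_zero]
    constructor
    · refine (norm_sum_fourierChar_le_card _ _).trans ?_
      rw [Int.card_Icc]
      exact_mod_cast (by omega : (min (N : ℤ) (N - h) + 1 - max 1 (1 - h)).toNat ≤ N)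
    · have := norm_mul_norm_sum_fourierChar_Icc_le (2 * t * h) (t * h ^ 2 + x * h)
        (max 1 (1 - h)) (min (N : ℤ) (N - h))
      rw [show ((t * ↑(2 * h) : ℝ)) = 2 * t * h by push_cast; ring]
      linarith
  · rw [sum_image (by simp)]
    simp only [Int.mul_ediv_cancel_left _ two_ne_zero]
    refine (norm_sum_sq_le_sum_norm_sum_mul_conj I _).trans
      (le_of_eq (sum_congr rfl fun h _ => ?_))
    simp only [fourierChar_quadratic_mul_conj, I, filter_add_mem_Icc, G]

lemma norm_coe_le_norm_coe_add_abs_sub (x y : ℝ) :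
    ‖(x : UnitAddCircle)‖ ≤ ‖(y : UnitAddCircle)‖ + |x - y| := by
  calc ‖(x : UnitAddCircle)‖ = ‖(y : UnitAddCircle) + ((x - y : ℝ) : UnitAddCircle)‖ := by
        rw [← AddCircle.coe_add, add_sub_cancel]
    _ ≤ ‖(y : UnitAddCircle)‖ + ‖((x - y : ℝ) : UnitAddCircle)‖ := norm_add_le _ _
    _ ≤ ‖(y : UnitAddCircle)‖ + |x - y| := by
        gcongr
        exact QuotientAddGroup.norm_mk_le_norm

lemma min_le_mul_norm_coe_div_of_floor_modEq {y : ℝ} {q r : ℕ} (hq : 0 < q)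
    (hy : ⌊y⌋ ≡ r [ZMOD q]) :
    min (r : ℝ) (q - 1 - r) ≤ q * ‖((y / q : ℝ) : UnitAddCircle)‖ := by
  obtain ⟨d, hd⟩ := Int.modEq_iff_dvd.1 hy.symm
  have hq' : (0 : ℝ) < q := by exact_mod_cast hq
  set n := round (y / q)
  have hfloor : (⌊y⌋ : ℝ) = r + q * d := by
    rw [show ⌊y⌋ = r + q * d by omega]; push_cast; ring
  have hle := Int.floor_le y
  have hlt := Int.lt_floor_add_one y
  rw [UnitAddCircle.norm_eq, ← abs_of_pos hq', ← abs_mul, abs_of_pos hq',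
    show (q : ℝ) * (y / q - n) = y - q * n by field_simp]
  rcases le_or_gt n d with hnd | hnd
  · have : (q : ℝ) * n ≤ q * d := by
      exact_mod_cast mul_le_mul_of_nonneg_left hnd (Nat.cast_nonneg q)
    exact (min_le_left _ _).trans (by rw [le_abs]; left; linarith)
  · have : (q : ℝ) * (d + 1) ≤ q * n := by
      exact_mod_cast mul_le_mul_of_nonneg_left hnd (Nat.cast_nonneg q)
    exact (min_le_right _ _).trans (by rw [le_abs]; right; linarith)

lemma natMod_injOn_Ioc {a : ℤ} {q : ℕ} (hq : 0 < q) (hco : Int.gcd a q = 1) (c m : ℤ) :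
    Set.InjOn (fun k => (c + a * k).natMod q) (Ioc m (m + q) : Set ℤ) := by
  intro k hk k' hk' heq
  have hmod : a * k ≡ a * k' [ZMOD q] := by
    refine Int.ModEq.add_left_cancel' c ?_
    unfold Int.ModEq
    simpa [Int.natMod, Int.toNat_of_nonneg (Int.emod_nonneg _ (by omega : (q : ℤ) ≠ 0))]
      using congrArg (fun r : ℕ => (r : ℤ)) heq
  have hkk' := Int.ModEq.cancel_left_div_gcd (by omega) hmod
  rw [Int.gcd_comm, hco, Nat.cast_one, Int.ediv_one] at hkk'
  have := Int.eq_zero_of_abs_lt_dvd hkk'.dvd (by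
    simp only [mem_coe, mem_Ioc] at hk hk'; rw [abs_lt]; omega)
  omega

noncomputable def slotBound (N : ℝ) (q r : ℕ) : ℝ := if r ≤ 1 then N else q / ((r : ℝ) - 1)

lemma slotBound_nonneg {N : ℝ} (hN : 0 ≤ N) (q r : ℕ) : 0 ≤ slotBound N q r := by
  unfold slotBound
  split_ifs with hr
  · exact hN
  · have : (1 : ℝ) < r := by exact_mod_cast not_le.1 hr
    exact div_nonneg (Nat.cast_nonneg _) (by linarith)

lemma le_slotBound {N d E : ℝ} {q w : ℕ} (hq : 0 < q) (hw : ((w : ℝ) - 1) / q ≤ d)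
    (hEN : E ≤ N) (hdE : d * E ≤ 1) : E ≤ slotBound N q w := by
  unfold slotBound
  split_ifs with hw1
  · exact hEN
  · have h1 : (1 : ℝ) < w := by exact_mod_cast not_le.1 hw1
    have hq' : (0 : ℝ) < q := by exact_mod_cast hq
    rw [div_le_iff₀ hq'] at hw
    rw [le_div_iff₀ (by linarith)]
    rcases le_or_gt E 0 with hE | hE <;> nlinarith

lemma sum_range_slotBound_le {N : ℝ} (hN : 0 ≤ N) (q : ℕ) :
    ∑ r ∈ range q, slotBound N q r ≤ 2 * N + q * (1 + Real.log q) := by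
  -- with two more terms, the tail `r ≥ 2` is exactly `q * harmonic q`
  calc ∑ r ∈ range q, slotBound N q r ≤ ∑ r ∈ range (q + 2), slotBound N q r :=
        sum_le_sum_of_subset_of_nonneg (range_subset_range.2 (by omega))
          fun r _ _ => slotBound_nonneg hN q r
    _ = q * harmonic q + 2 * N := by
        simp only [sum_range_succ', slotBound, harmonic, Rat.cast_sum, mul_sum]
        norm_num [div_eq_mul_inv]
        ring
    _ ≤ 2 * N + q * (1 + Real.log q) := by
        have := harmonic_le_one_add_log q
        nlinarith [(Nat.cast_nonneg q : (0 : ℝ) ≤ q)]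

lemma le_slotBound_add_slotBound {a k : ℤ} {q r : ℕ} (hq : 0 < q) (hr : r < q)
    {t γ N E : ℝ} (hmod : ⌊q * γ⌋ + a * k ≡ r [ZMOD q])
    (happrox : |t * k - (γ + a * k / q)| ≤ 1 / q) (hEN : E ≤ N) (hN : 0 ≤ N)
    (hdE : ‖((t * k : ℝ) : UnitAddCircle)‖ * E ≤ 1) :
    E ≤ slotBound N q r + slotBound N q (q - 1 - r) := by
  have hq' : (0 : ℝ) < q := by exact_mod_cast hq
  have hfloor : ⌊q * γ + (a * k : ℤ)⌋ = ⌊q * γ⌋ + a * k := Int.floor_add_intCast _ _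
  have hmin := min_le_mul_norm_coe_div_of_floor_modEq hq (hfloor ▸ hmod)
  rw [show (q * γ + (a * k : ℤ) : ℝ) / q = γ + a * k / q by push_cast; field_simp] at hmin
  have htri := norm_coe_le_norm_coe_add_abs_sub (γ + a * k / q) (t * k)
  have hq_approx : (q : ℝ) * |t * k - (γ + a * k / q)| ≤ 1 := by
    have := mul_le_mul_of_nonneg_left happrox hq'.le
    rwa [mul_one_div_cancel hq'.ne'] at this
  have hw : (((min r (q - 1 - r) : ℕ) : ℝ) - 1) / q ≤ ‖((t * k : ℝ) : UnitAddCircle)‖ := by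
    rw [Nat.cast_min, Nat.cast_sub (by omega), Nat.cast_sub (by omega), Nat.cast_one,
      div_le_iff₀ hq']
    rw [abs_sub_comm] at htri
    nlinarith [mul_le_mul_of_nonneg_left htri hq'.le]
  have hE := le_slotBound hq hw hEN hdE
  rcases min_choice r (q - 1 - r) with h | h <;> rw [h] at hE
  · linarith [slotBound_nonneg hN q (q - 1 - r)]
  · linarith [slotBound_nonneg hN q r]

lemma sum_le_of_subset_Ioc {a : ℤ} {q : ℕ} (hq : 0 < q) (hco : Int.gcd a q = 1) {t : ℝ}
    (ht : |t - a / q| ≤ 1 / q ^ 2) {N : ℝ} (hN : 0 ≤ N) {E : ℤ → ℝ} {K : Finset ℤ} {m : ℤ}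
    (hK : K ⊆ Ioc m (m + q))
    (hE : ∀ k ∈ K, E k ≤ N ∧ ‖((t * k : ℝ) : UnitAddCircle)‖ * E k ≤ 1) :
    ∑ k ∈ K, E k ≤ 2 * (2 * N + q * (1 + Real.log q)) := by
  set γ := (t - a / q) * m
  -- `slot k = r` iff `γ + ak/q` lies in `[r/q, (r + 1)/q)` modulo `1`
  set slot : ℤ → ℕ := fun k => (⌊q * γ⌋ + a * k).natMod q
  set F : ℕ → ℝ := fun r => slotBound N q r + slotBound N q (q - 1 - r)
  have hslot : ∀ k ∈ K, E k ≤ F (slot k) := by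
    intro k hk
    have hkm := mem_Ioc.1 (hK hk)
    have hmod : ⌊q * γ⌋ + a * k ≡ slot k [ZMOD q] := by
      change _ ≡ (((⌊q * γ⌋ + a * k) % q).toNat : ℤ) [ZMOD q]
      rw [Int.toNat_of_nonneg (Int.emod_nonneg _ (by omega))]
      exact (Int.mod_modEq _ _).symm
    have happrox : |t * k - (γ + a * k / q)| ≤ 1 / q := by
      have hkm' : |((k - m : ℤ) : ℝ)| ≤ q := by
        rw [abs_of_pos (by exact_mod_cast sub_pos.2 hkm.1)]
        exact_mod_cast (by omega : k - m ≤ (q : ℤ))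
      rw [show t * k - (γ + a * k / q) = (t - a / q) * ((k - m : ℤ) : ℝ) by push_cast; ring,
        abs_mul]
      calc |t - a / q| * |((k - m : ℤ) : ℝ)| ≤ 1 / q ^ 2 * q := by gcongr
        _ = 1 / q := by field_simp
    exact le_slotBound_add_slotBound hq (Int.natMod_lt (by omega)) hmod happrox (hE k hk).1 hN
      (hE k hk).2
  have hinj : Set.InjOn slot K := fun k hk k' hk' =>
    natMod_injOn_Ioc hq hco _ m (mem_coe.2 (hK hk)) (mem_coe.2 (hK hk'))
  calc ∑ k ∈ K, E k ≤ ∑ k ∈ K, F (slot k) := sum_le_sum hslot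
    _ = ∑ r ∈ K.image slot, F r := (sum_image hinj).symm
    _ ≤ ∑ r ∈ range q, F r := by
        refine sum_le_sum_of_subset_of_nonneg ?_ fun r _ _ => ?_
        · intro r hr
          obtain ⟨k, -, rfl⟩ := mem_image.1 hr
          exact mem_range.2 (Int.natMod_lt (by omega))
        · exact add_nonneg (slotBound_nonneg hN q r) (slotBound_nonneg hN q _)
    _ = 2 * ∑ r ∈ range q, slotBound N q r := by
        rw [sum_add_distrib, sum_range_reflect]; ring
    _ ≤ 2 * (2 * N + q * (1 + Real.log q)) := by
        gcongr; exact sum_range_slotBound_le hN q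

lemma sum_le_of_subset_Ioc_mul {a : ℤ} {q : ℕ} (hq : 0 < q) (hco : Int.gcd a q = 1) {t : ℝ}
    (ht : |t - a / q| ≤ 1 / q ^ 2) {N : ℝ} (hN : 0 ≤ N) {E : ℤ → ℝ} (J : ℕ) {K : Finset ℤ}
    {m : ℤ} (hK : K ⊆ Ioc m (m + J * q))
    (hE : ∀ k ∈ K, E k ≤ N ∧ ‖((t * k : ℝ) : UnitAddCircle)‖ * E k ≤ 1) :
    ∑ k ∈ K, E k ≤ J * (2 * (2 * N + q * (1 + Real.log q))) := by
  induction J generalizing K m with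
  | zero =>
    obtain rfl : K = ∅ := subset_empty.1 (by simpa using hK)
    simp
  | succ J ih =>
    rw [← sum_filter_add_sum_filter_not K (· ≤ m + q)]
    have hfirst := sum_le_of_subset_Ioc hq hco ht hN (K := {k ∈ K | k ≤ m + q}) (m := m)
      (fun k hk => by
        obtain ⟨hkK, hkm⟩ := mem_filter.1 hk
        exact mem_Ioc.2 ⟨(mem_Ioc.1 (hK hkK)).1, hkm⟩)
      (fun k hk => hE k (mem_filter.1 hk).1)
    have hrest := ih (K := {k ∈ K | ¬ k ≤ m + q}) (m := m + q)
      (fun k hk => by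
        obtain ⟨hkK, hkm⟩ := mem_filter.1 hk
        have := (mem_Ioc.1 (hK hkK)).2
        exact mem_Ioc.2 ⟨by omega, by push_cast at this ⊢; linarith⟩)
      (fun k hk => hE k (mem_filter.1 hk).1)
    push_cast
    linarith

theorem norm_sum_fourierChar_quadratic_sq_le {a : ℤ} {q : ℕ} (hq : 2 ≤ q)
    (hco : Int.gcd a q = 1) {t : ℝ} (ht : |t - a / q| ≤ 1 / q ^ 2) (x : ℝ) (N : ℕ) :
    ‖∑ n ∈ Icc (1 : ℤ) N, (𝐞 (t * n ^ 2 + x * n) : ℂ)‖ ^ 2 ≤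
      16 * (N ^ 2 / q) + 32 * (N * Real.log q) + 6 * (q * Real.log q) := by
  obtain ⟨K, E, hK, hE, hS⟩ := weyl_differencing t x N
  set J := 4 * N / q + 1
  have hJq : 4 * N ≤ J * q := by
    rw [add_mul, one_mul]; exact (Nat.lt_div_mul_add (by omega)).le
  have hcover : K ⊆ Ioc (-(2 * N : ℤ)) (-(2 * N : ℤ) + J * q) :=
    hK.trans (Ioc_subset_Ioc_right (by omega))
  have hsum := sum_le_of_subset_Ioc_mul (by omega) hco ht (Nat.cast_nonneg N) J hcover hE
  have hq' : (2 : ℝ) ≤ q := by exact_mod_cast hq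
  have hJ : (J : ℝ) ≤ 4 * N / q + 1 := by
    have := Nat.cast_div_le (α := ℝ) (m := 4 * N) (n := q)
    simp only [J]
    push_cast at this ⊢
    linarith
  have hlog : 1 ≤ 2 * Real.log q := by
    linarith [Real.log_two_gt_d9, Real.log_le_log two_pos hq']
  calc _ ≤ (J : ℝ) * (2 * (2 * N + q * (1 + Real.log q))) := hS.trans hsum
    _ ≤ (4 * N / q + 1) * (2 * (2 * N + q * (1 + Real.log q))) := by gcongr
    _ = 16 * (N ^ 2 / q) + 12 * N + 8 * (N * Real.log q) + 2 * q + 2 * (q * Real.log q) := by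
        field_simp; ring
    _ ≤ _ := by nlinarith [(Nat.cast_nonneg N : (0 : ℝ) ≤ N)]

lemma sum_Icc_natCast {M : Type*} [AddCommMonoid M] (f : ℤ → M) (N : ℕ) :
    ∑ n ∈ Icc 1 N, f n = ∑ n ∈ Icc (1 : ℤ) N, f n := by
  refine sum_nbij' (↑) Int.toNat ?_ ?_ ?_ ?_ ?_ <;> intro n hn <;> simp_all <;> omega

/-- Weyl's inequality for quadratic exponential sums: if `|t - a/q| ≤ 1/q²` with
`gcd(a,q) = 1`, `q ≥ 2`, then
`|∑_{n=1}^N e^{2πi(tn² + xn)}| ≤ C max{N/√q, √(N log q), √(q log q)}`. -/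
theorem stmt11 :
    ∃ C : ℝ, 0 < C ∧ ∀ (a : ℤ) (q : ℕ), 2 ≤ q → Int.gcd a (q : ℤ) = 1 →
      ∀ t x : ℝ, |t - (a : ℝ) / (q : ℝ)| ≤ 1 / (q : ℝ) ^ 2 → ∀ N : ℕ,
        ‖∑ n ∈ Finset.Icc 1 N,
            Complex.exp (2 * Real.pi * Complex.I * ((t * (n : ℝ) ^ 2 + x * (n : ℝ) : ℝ) : ℂ))‖
          ≤ C * max ((N : ℝ) / Real.sqrt q)
              (max (Real.sqrt ((N : ℝ) * Real.log q)) (Real.sqrt ((q : ℝ) * Real.log q))) := by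
  refine ⟨8, by norm_num, fun a q hq hco t x ht N => ?_⟩
  have hsum : ∑ n ∈ Icc 1 N,
      Complex.exp (2 * π * I * ((t * (n : ℝ) ^ 2 + x * (n : ℝ) : ℝ) : ℂ)) =
      ∑ n ∈ Icc (1 : ℤ) N, (𝐞 (t * n ^ 2 + x * n) : ℂ) := by
    rw [← sum_Icc_natCast fun n : ℤ => (𝐞 (t * n ^ 2 + x * n) : ℂ)]
    refine sum_congr rfl fun n _ => ?_
    rw [Real.fourierChar_apply]
    push_cast
    ring_nf
  set μ := max ((N : ℝ) / √q) (max √(N * Real.log q) √(q * Real.log q))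
  have h1 : (N : ℝ) ^ 2 / q ≤ μ ^ 2 := by
    rw [← Real.sq_sqrt (Nat.cast_nonneg q), ← div_pow]
    exact pow_le_pow_left₀ (by positivity) (le_max_left _ _) 2
  have h2 : (N : ℝ) * Real.log q ≤ μ ^ 2 := by
    rw [← Real.sq_sqrt (by positivity : (0 : ℝ) ≤ N * Real.log q)]
    exact pow_le_pow_left₀ (by positivity) ((le_max_left _ _).trans (le_max_right _ _)) 2
  have h3 : (q : ℝ) * Real.log q ≤ μ ^ 2 := by
    rw [← Real.sq_sqrt (by positivity : (0 : ℝ) ≤ q * Real.log q)]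
    exact pow_le_pow_left₀ (by positivity) ((le_max_right _ _).trans (le_max_right _ _)) 2
  rw [hsum]
  refine (pow_le_pow_iff_left₀ (norm_nonneg _) (by positivity) two_ne_zero).1 ?_
  nlinarith [norm_sum_fourierChar_quadratic_sq_le hq hco ht x N]
end

section
/- Let d ≥ 1. There exists a constant C (depending only on d) such that for all f₁,…,f_{d+1} ∈ ℓ²(ℤ): ‖T*(f₁,…,f_{d+1})‖_{ℓ²(ℤ)} ≤ C ∏_{j=1}^{d+1} ‖f_j‖_{ℓ²(ℤ)}, where T*(f₁,…,f_{d+1})(n) = sup_{N ∈ ℕ} |A_N(f₁,…,f_{d+1})(n)| and A_N(f₁,…,f_{d+1})(n) = (1/N^d) ∑_{m₁=1}^{N} ⋯ ∑_{m_d=1}^{N} f₁(n−m₁)⋯f_d(n−m_d) f_{d+1}(n−(m₁²+⋯+m_d²)). -/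
open MeasureTheory Complex Real
open scoped Classical

/-- The multilinear average
`A_N(f₁,…,f_{d+1})(n)
  = (1/N^d) ∑_{m₁=1}^{N} ⋯ ∑_{m_d=1}^{N}
      f₁(n-m₁)⋯f_d(n-m_d) f_{d+1}(n-(m₁²+⋯+m_d²))`. -/
noncomputable def AveN (d N : ℕ) (f : Fin (d + 1) → ℤ → ℂ) (n : ℤ) : ℂ :=
  ((((N : ℝ) ^ d)⁻¹ : ℝ) : ℂ) *
    ∑ m ∈ Finset.Icc (fun _ : Fin d => 1) (fun _ => N),
      (∏ j, f j.castSucc (n - (m j : ℤ))) * f (Fin.last d) (n - ∑ j, ((m j : ℤ)) ^ 2)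

/-!
For `1 ≤ m_j ≤ N` we have `1/N ≤ 1/m_j`, so every average `A_N` is dominated, uniformly in
`N`, by the series `G(n) = ∑_{m ∈ ℕ^d} ∏_j m_j⁻¹ |f_j(n - m_j)| · |f_{d+1}(n - |m|²)|`.
Cauchy–Schwarz in `m` bounds `G(n)²` by `∏_{j ≤ d} ‖f_j‖₂²` times
`∑_m ∏_j m_j⁻² |f_{d+1}(n - |m|²)|²`, and summing the latter over `n` gives
`ζ(2)^d ‖f_{d+1}‖₂²`. Hence `C = ζ(2)^{d/2} = (π/√6)^d` works.
-/

open scoped ENNReal NNReal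

namespace ENNReal

theorem tsum_fin_pi_prod {β : Type*} : ∀ {d : ℕ} (g : Fin d → β → ℝ≥0∞),
    ∑' m : Fin d → β, ∏ j, g j (m j) = ∏ j, ∑' k, g j k
  | 0, g => by simp
  | d + 1, g => by
    rw [← (Fin.consEquiv fun _ => β).tsum_eq, ENNReal.tsum_prod', Fin.prod_univ_succ]
    simp only [Fin.consEquiv_apply, Fin.prod_univ_succ, Fin.cons_zero, Fin.cons_succ]
    simp_rw [ENNReal.tsum_mul_left, ENNReal.tsum_mul_right, tsum_fin_pi_prod]

theorem tsum_mul_sq_le {ι : Type*} (a b : ι → ℝ≥0∞) :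
    (∑' i, a i * b i) ^ 2 ≤ (∑' i, a i ^ 2) * ∑' i, b i ^ 2 := by
  let _ : MeasurableSpace ι := ⊤
  have hCS := lintegral_mul_le_Lp_mul_Lq Measure.count Real.HolderConjugate.two_two
    (Measurable.of_discrete (f := a)).aemeasurable (Measurable.of_discrete (f := b)).aemeasurable
  simp only [lintegral_count, Pi.mul_apply, rpow_ofNat] at hCS
  calc (∑' i, a i * b i) ^ 2
      ≤ ((∑' i, a i ^ 2) ^ (1 / 2 : ℝ) * (∑' i, b i ^ 2) ^ (1 / 2 : ℝ)) ^ 2 := by gcongr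
    _ = (∑' i, a i ^ 2) * ∑' i, b i ^ 2 := by
      rw [mul_pow, ← rpow_natCast, ← rpow_natCast, ← rpow_mul, ← rpow_mul]
      norm_num

theorem inv_natCast_le_coe_inv {k N : ℕ} (hk : 1 ≤ k) (hkN : k ≤ N) :
    (N : ℝ≥0∞)⁻¹ ≤ ((k : ℝ≥0)⁻¹ : ℝ≥0) := by
  rw [coe_inv (by positivity), coe_natCast]
  exact ENNReal.inv_le_inv.mpr (Nat.cast_le.mpr hkN)

theorem tsum_coe_inv_natCast_sq :
    ∑' k : ℕ, (((k : ℝ≥0)⁻¹ : ℝ≥0) : ℝ≥0∞) ^ 2 = ENNReal.ofReal (π ^ 2 / 6) := by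
  rw [← hasSum_zeta_two.tsum_eq,
    ofReal_tsum_of_nonneg (fun _ => by positivity) hasSum_zeta_two.summable]
  congr 1 with k
  rw [← coe_pow, ← ofReal_coe_nnreal]
  simp

end ENNReal

theorem Real.enorm_iSup_norm_le {ι E : Type*} [SeminormedAddGroup E] {u : ι → E} {M : ℝ≥0∞}
    (h : ∀ i, ‖u i‖ₑ ≤ M) : ‖⨆ i, ‖u i‖‖ₑ ≤ M := by
  rcases eq_or_ne M ⊤ with rfl | hM
  · exact le_top
  rw [Real.enorm_eq_ofReal (Real.iSup_nonneg fun i => norm_nonneg _)]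
  refine ENNReal.ofReal_le_of_le_toReal (Real.iSup_le (fun i => ?_) ENNReal.toReal_nonneg)
  rw [← toReal_enorm]
  exact ENNReal.toReal_mono hM (h i)

theorem MeasureTheory.eLpNorm_two_count_sq {α ε : Type*} [MeasurableSpace α]
    [MeasurableSingletonClass α] [TopologicalSpace ε] [ContinuousENorm ε] (g : α → ε) :
    eLpNorm g 2 Measure.count ^ 2 = ∑' x, ‖g x‖ₑ ^ 2 := by
  rw [eLpNorm_eq_lintegral_rpow_enorm_toReal (by norm_num) (by norm_num), lintegral_count,
    ← ENNReal.rpow_natCast, ← ENNReal.rpow_mul]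
  norm_num

section Majorant

variable {E : Type*} [ENorm E]

/-- Since `(0 : ℝ≥0)⁻¹ = 0`, the terms with some `m j = 0` vanish. -/
noncomputable def aveMajorant (d : ℕ) (f : Fin (d + 1) → ℤ → E) (n : ℤ) : ℝ≥0∞ :=
  ∑' m : Fin d → ℕ, (∏ j, ‖f j.castSucc (n - m j)‖ₑ) *
    ((∏ j, (((m j : ℝ≥0)⁻¹ : ℝ≥0) : ℝ≥0∞)) * ‖f (Fin.last d) (n - ∑ j, (m j : ℤ) ^ 2)‖ₑ)

theorem aveMajorant_sq_le (d : ℕ) (f : Fin (d + 1) → ℤ → E) (n : ℤ) :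
    aveMajorant d f n ^ 2 ≤ (∏ j : Fin d, ∑' x, ‖f j.castSucc x‖ₑ ^ 2) *
      ∑' m : Fin d → ℕ, (∏ j, (((m j : ℝ≥0)⁻¹ : ℝ≥0) : ℝ≥0∞) ^ 2) *
        ‖f (Fin.last d) (n - ∑ j, (m j : ℤ) ^ 2)‖ₑ ^ 2 := by
  refine (ENNReal.tsum_mul_sq_le _ _).trans ?_
  simp only [mul_pow, ← Finset.prod_pow]
  gcongr
  rw [ENNReal.tsum_fin_pi_prod fun j (k : ℕ) => ‖f j.castSucc (n - k)‖ₑ ^ 2]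
  gcongr with j
  exact ENNReal.tsum_comp_le_tsum_of_injective (fun k l h => by simpa using h) _

theorem tsum_aveMajorant_sq_le (d : ℕ) (f : Fin (d + 1) → ℤ → E) :
    ∑' n, aveMajorant d f n ^ 2 ≤ ENNReal.ofReal (π ^ 2 / 6) ^ d * ∏ j, ∑' x, ‖f j x‖ₑ ^ 2 := by
  set S := fun j => ∑' x, ‖f j x‖ₑ ^ 2
  have hshift (c : ℤ) : ∑' n, ‖f (Fin.last d) (n - c)‖ₑ ^ 2 = S (Fin.last d) :=
    (Equiv.subRight c).tsum_eq fun x => ‖f (Fin.last d) x‖ₑ ^ 2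
  calc ∑' n, aveMajorant d f n ^ 2
      ≤ ∑' n, (∏ j : Fin d, S j.castSucc) *
          ∑' m : Fin d → ℕ, (∏ j, (((m j : ℝ≥0)⁻¹ : ℝ≥0) : ℝ≥0∞) ^ 2) *
            ‖f (Fin.last d) (n - ∑ j, (m j : ℤ) ^ 2)‖ₑ ^ 2 :=
        ENNReal.tsum_le_tsum fun n => aveMajorant_sq_le d f n
    _ = (∏ j : Fin d, S j.castSucc) *
          ∑' m : Fin d → ℕ, (∏ j, (((m j : ℝ≥0)⁻¹ : ℝ≥0) : ℝ≥0∞) ^ 2) *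
            ∑' n, ‖f (Fin.last d) (n - ∑ j, (m j : ℤ) ^ 2)‖ₑ ^ 2 := by
        rw [ENNReal.tsum_mul_left, ENNReal.tsum_comm]
        simp_rw [ENNReal.tsum_mul_left]
    _ = (∏ j : Fin d, S j.castSucc) * (ENNReal.ofReal (π ^ 2 / 6) ^ d * S (Fin.last d)) := by
        simp_rw [hshift, ENNReal.tsum_mul_right]
        rw [ENNReal.tsum_fin_pi_prod fun (_ : Fin d) (k : ℕ) => (((k : ℝ≥0)⁻¹ : ℝ≥0) : ℝ≥0∞) ^ 2,
          ENNReal.tsum_coe_inv_natCast_sq, Finset.prod_const, Finset.card_univ, Fintype.card_fin]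
    _ = ENNReal.ofReal (π ^ 2 / 6) ^ d * ∏ j, S j := by
        rw [Fin.prod_univ_castSucc]
        ring

end Majorant

theorem enorm_aveN_le_aveMajorant (d N : ℕ) (f : Fin (d + 1) → ℤ → ℂ) (n : ℤ) :
    ‖AveN d N f n‖ₑ ≤ aveMajorant d f n := by
  have hscale : ‖((((N : ℝ) ^ d)⁻¹ : ℝ) : ℂ)‖ₑ ≤ ∏ _j : Fin d, (N : ℝ≥0∞)⁻¹ := by
    rw [← ofReal_norm, Complex.norm_real, Real.norm_of_nonneg (by positivity),
      Finset.prod_const, Finset.card_univ, Fintype.card_fin, ← ENNReal.inv_pow]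
    refine ENNReal.ofReal_inv_le.trans_eq ?_
    rw [ENNReal.ofReal_pow (by positivity), ENNReal.ofReal_natCast]
  calc ‖AveN d N f n‖ₑ
      ≤ (∏ _j : Fin d, (N : ℝ≥0∞)⁻¹) * ∑ m ∈ Finset.Icc (fun _ : Fin d => 1) (fun _ => N),
          (∏ j, ‖f j.castSucc (n - m j)‖ₑ) * ‖f (Fin.last d) (n - ∑ j, (m j : ℤ) ^ 2)‖ₑ := by
        rw [AveN, enorm_mul]
        gcongr
        refine (enorm_sum_le _ _).trans_eq ?_
        simp_rw [enorm_mul, enorm_eq_nnnorm, nnnorm_prod, ENNReal.ofNNReal_finsetProd]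
    _ ≤ ∑ m ∈ Finset.Icc (fun _ : Fin d => 1) (fun _ => N), (∏ j, ‖f j.castSucc (n - m j)‖ₑ) *
          ((∏ j, (((m j : ℝ≥0)⁻¹ : ℝ≥0) : ℝ≥0∞)) *
            ‖f (Fin.last d) (n - ∑ j, (m j : ℤ) ^ 2)‖ₑ) := by
        rw [Finset.mul_sum]
        refine Finset.sum_le_sum fun m hm => ?_
        rw [mul_left_comm]
        gcongr with j
        obtain ⟨h1, hN⟩ := Finset.mem_Icc.mp hm
        exact ENNReal.inv_natCast_le_coe_inv (h1 j) (hN j)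
    _ ≤ aveMajorant d f n := ENNReal.sum_le_tsum _

theorem stmt17_general (d : ℕ) :
    ∃ C : ℝ, 0 < C ∧
      ∀ f : Fin (d + 1) → ℤ → ℂ, (∀ j, MemLp (f j) 2 (Measure.count : Measure ℤ)) →
        eLpNorm (fun n : ℤ => ⨆ N : ℕ, ‖AveN d N f n‖) 2 (Measure.count : Measure ℤ)
          ≤ ENNReal.ofReal
              (C * ∏ j, (eLpNorm (f j) 2 (Measure.count : Measure ℤ)).toReal) := by
  refine ⟨√(π ^ 2 / 6) ^ d, by positivity, fun f hf => ?_⟩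
  have hfin : ∏ j, eLpNorm (f j) 2 Measure.count ≠ ⊤ :=
    ENNReal.prod_ne_top fun j _ => (hf j).eLpNorm_ne_top
  rw [ENNReal.ofReal_mul (by positivity), ← ENNReal.toReal_prod, ENNReal.ofReal_toReal hfin,
    ← ENNReal.pow_le_pow_left_iff two_ne_zero, eLpNorm_two_count_sq]
  calc ∑' n, ‖⨆ N : ℕ, ‖AveN d N f n‖‖ₑ ^ 2
      ≤ ∑' n, aveMajorant d f n ^ 2 := ENNReal.tsum_le_tsum fun n => by
        gcongr
        exact Real.enorm_iSup_norm_le fun N => enorm_aveN_le_aveMajorant d N f n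
    _ ≤ ENNReal.ofReal (π ^ 2 / 6) ^ d * ∏ j, ∑' x, ‖f j x‖ₑ ^ 2 := tsum_aveMajorant_sq_le d f
    _ = (ENNReal.ofReal (√(π ^ 2 / 6) ^ d) * ∏ j, eLpNorm (f j) 2 Measure.count) ^ 2 := by
        simp_rw [mul_pow, ← Finset.prod_pow, eLpNorm_two_count_sq,
          ENNReal.ofReal_pow (Real.sqrt_nonneg _), ← pow_mul, mul_comm d, pow_mul,
          ← ENNReal.ofReal_pow (Real.sqrt_nonneg _),
          Real.sq_sqrt (by positivity : (0 : ℝ) ≤ π ^ 2 / 6)]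

theorem stmt17 (d : ℕ) (hd : 1 ≤ d) :
    ∃ C : ℝ, 0 < C ∧
      ∀ f : Fin (d + 1) → ℤ → ℂ, (∀ j, MemLp (f j) 2 (Measure.count : Measure ℤ)) →
        eLpNorm (fun n : ℤ => ⨆ N : ℕ, ‖AveN d N f n‖) 2 (Measure.count : Measure ℤ)
          ≤ ENNReal.ofReal
              (C * ∏ j, (eLpNorm (f j) 2 (Measure.count : Measure ℤ)).toReal) :=
  stmt17_general d
end
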